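/- One-step predictive distribution is Student t (the Gosset rule): let n ≥ 2 be an integer, p real with ν := n + p − 2 > 0, and y ∈ ℝⁿ with Q(y) > 0. Set c = √(Q(y)(n+1)/(n ν)). Then for every x ∈ ℝ, λ_{n+1,p}(y_1, …, y_n, x) / λ_{n,p}(y) = (1/c) · [Γ((ν+1)/2) / (√(πν) Γ(ν/2))] · (1 + ((x − ȳ)/c)²/ν)^{−(ν+1)/2}, i.e., the ratio is the density at x of ȳ + c·T where T has the Student t distribution on ν degrees of freedom. -/

import Mathlib

/-!
Appending `x` to `y` raises `Q` by `n/(n+1) · (x - ȳ)²`. Both the ratio of the closed-form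
intensities and the rescaled Student density `c⁻¹ g_ν((x - ȳ)/c)` can be written as
`Γ((ν+1)/2)/(√π Γ(ν/2)) · S^{ν/2} / (S + (x - ȳ)²)^{(ν+1)/2}`, with `S = (n+1)/n · Q(y)` for the
former and `S = ν c²` for the latter, and these agree by the choice of `c`.
-/

open MeasureTheory
open scoped ENNReal

/-- `Q(z) = ∑ᵢ (zᵢ - z̄)²` where `z̄` is the mean of the coordinates. -/
noncomputable def Qstat (m : ℕ) (z : Fin m → ℝ) : ℝ :=
  ∑ i, (z i - (∑ j, z j) / m) ^ 2

/-- The closed-form Gaussian intensity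
`λ_{m,p}(z) = Γ((m+p-2)/2) 2^{(p-3)/2} π^{-(m-1)/2} m^{-1/2} / Q(z)^{(m+p-2)/2}`. -/
noncomputable def lamClosed (m : ℕ) (p : ℝ) (z : Fin m → ℝ) : ℝ :=
  Real.Gamma (((m : ℝ) + p - 2) / 2) * (2 : ℝ) ^ ((p - 3) / 2) *
    Real.pi ^ (-((m : ℝ) - 1) / 2) * (m : ℝ) ^ (-(1 : ℝ) / 2) /
      Qstat m z ^ (((m : ℝ) + p - 2) / 2)

/-- The Student t density on `ν > 0` degrees of freedom:
`g_ν(t) = Γ((ν+1)/2) / (√(πν) Γ(ν/2)) (1 + t²/ν)^{-(ν+1)/2}`. -/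
noncomputable def studentDensity (ν t : ℝ) : ℝ :=
  Real.Gamma ((ν + 1) / 2) / (Real.sqrt (Real.pi * ν) * Real.Gamma (ν / 2)) *
    (1 + t ^ 2 / ν) ^ (-(ν + 1) / 2)

theorem Qstat_nonneg (m : ℕ) (z : Fin m → ℝ) : 0 ≤ Qstat m z :=
  Finset.sum_nonneg fun _ _ => sq_nonneg _

theorem Qstat_eq_sum_sq_sub (m : ℕ) (z : Fin m → ℝ) :
    Qstat m z = ∑ i, z i ^ 2 - (∑ i, z i) ^ 2 / m := by
  rcases Nat.eq_zero_or_pos m with rfl | hm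
  · simp [Qstat]
  simp only [Qstat, sub_sq, Finset.sum_add_distrib, Finset.sum_sub_distrib, ← Finset.sum_mul,
    ← Finset.mul_sum, Finset.sum_const, Finset.card_univ, Fintype.card_fin, nsmul_eq_mul]
  field_simp
  ring

theorem Qstat_snoc (n : ℕ) (y : Fin n → ℝ) (x : ℝ) :
    Qstat (n + 1) (Fin.snoc y x) = Qstat n y + n / (n + 1) * (x - (∑ i, y i) / n) ^ 2 := by
  rcases Nat.eq_zero_or_pos n with rfl | hn
  · simp [Qstat]
  simp only [Qstat_eq_sum_sq_sub, Fin.sum_univ_castSucc, Fin.snoc_castSucc, Fin.snoc_last]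
  push_cast
  field_simp
  ring

theorem pos_of_Qstat_pos {m : ℕ} {z : Fin m → ℝ} (h : 0 < Qstat m z) : 0 < m := by
  rcases Nat.eq_zero_or_pos m with rfl | hm
  · simp [Qstat] at h
  · exact hm

theorem mul_rpow_div_mul_rpow_add_half {k a b : ℝ} (hk : 0 < k) (ha : 0 ≤ a) (hb : 0 ≤ b)
    (s : ℝ) : (k * a) ^ s / (k * b) ^ (s + 1 / 2) = a ^ s / (b ^ (s + 1 / 2) * Real.sqrt k) := by
  rw [Real.mul_rpow hk.le ha, Real.mul_rpow hk.le hb, Real.rpow_add hk, ← Real.sqrt_eq_rpow]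
  have : k ^ s ≠ 0 := (Real.rpow_pos_of_pos hk s).ne'
  field_simp

theorem lamClosed_succ_div_lamClosed {m : ℕ} (hm : 0 < m) {p ν : ℝ} (hν : 0 < ν)
    (hpν : (m : ℝ) + p - 2 = ν) {z : Fin m → ℝ} (hz : 0 < Qstat m z) (z' : Fin (m + 1) → ℝ) :
    lamClosed (m + 1) p z' / lamClosed m p z =
      Real.Gamma ((ν + 1) / 2) / (Real.sqrt Real.pi * Real.Gamma (ν / 2)) *
        ((m + 1) / m * Qstat m z) ^ (ν / 2) / ((m + 1) / m * Qstat (m + 1) z') ^ ((ν + 1) / 2) := by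
  have hm' : (0 : ℝ) < m := by exact_mod_cast hm
  rw [add_div ν, mul_div_assoc,
    mul_rpow_div_mul_rpow_add_half (by positivity) hz.le (Qstat_nonneg _ _)]
  unfold lamClosed
  push_cast
  rw [show ((m : ℝ) + 1 + p - 2) / 2 = ν / 2 + 1 / 2 by rw [← hpν]; ring, hpν,
    show -((m : ℝ) + 1 - 1) / 2 = -((m : ℝ) - 1) / 2 - 1 / 2 by ring,
    Real.rpow_sub Real.pi_pos, show -(1 : ℝ) / 2 = -(1 / 2) by ring, Real.rpow_neg (by positivity),
    Real.rpow_neg hm'.le,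
    ← Real.sqrt_eq_rpow, ← Real.sqrt_eq_rpow, ← Real.sqrt_eq_rpow, Real.sqrt_div' _ hm'.le]
  have := Real.Gamma_pos_of_pos (half_pos hν)
  have := Real.rpow_pos_of_pos hz (ν / 2)
  have := Real.rpow_pos_of_pos Real.pi_pos (-((m : ℝ) - 1) / 2)
  field_simp

theorem inv_mul_studentDensity_div {ν c : ℝ} (hν : 0 < ν) (hc : 0 < c) (u : ℝ) :
    1 / c * studentDensity ν (u / c) =
      Real.Gamma ((ν + 1) / 2) / (Real.sqrt Real.pi * Real.Gamma (ν / 2)) *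
        (ν * c ^ 2) ^ (ν / 2) / (ν * c ^ 2 + u ^ 2) ^ ((ν + 1) / 2) := by
  have hS : 0 < ν * c ^ 2 := by positivity
  have hbase : 1 + (u / c) ^ 2 / ν = (ν * c ^ 2 + u ^ 2) / (ν * c ^ 2) := by field_simp
  have hpow : (ν * c ^ 2) ^ ((ν + 1) / 2) = (ν * c ^ 2) ^ (ν / 2) * (Real.sqrt ν * c) := by
    rw [add_div, Real.rpow_add hS, ← Real.sqrt_eq_rpow, Real.sqrt_mul hν.le, Real.sqrt_sq hc.le]
  rw [studentDensity, hbase, neg_div, Real.rpow_neg (by positivity),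
    Real.div_rpow (by positivity) hS.le, hpow, Real.sqrt_mul Real.pi_pos.le]
  field_simp

theorem gosset_rule_general (n : ℕ) (p : ℝ) (hν : 0 < (n : ℝ) + p - 2)
    (y : Fin n → ℝ) (hQ : 0 < Qstat n y) (x : ℝ)
    (ν : ℝ) (hνdef : ν = (n : ℝ) + p - 2)
    (c : ℝ) (hcdef : c = Real.sqrt (Qstat n y * ((n : ℝ) + 1) / ((n : ℝ) * ν))) :
    lamClosed (n + 1) p (Fin.snoc y x) / lamClosed n p y =
      (1 / c) * studentDensity ν ((x - (∑ i, y i) / (n : ℝ)) / c) := by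
  have hn := pos_of_Qstat_pos hQ
  have hν' : 0 < ν := hνdef ▸ hν
  have hc : 0 < c := hcdef ▸ Real.sqrt_pos.mpr (by positivity)
  have hνc : ν * c ^ 2 = (n + 1) / n * Qstat n y := by
    rw [hcdef, Real.sq_sqrt (by positivity)]
    field_simp
  have hsnoc : (n + 1) / n * Qstat (n + 1) (Fin.snoc y x) =
      (n + 1) / n * Qstat n y + (x - (∑ i, y i) / n) ^ 2 := by
    rw [Qstat_snoc]
    field_simp
  rw [lamClosed_succ_div_lamClosed hn hν' hνdef.symm hQ, hsnoc,
    inv_mul_studentDensity_div hν' hc, hνc]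

/-- The Gosset rule: with `ν = n + p - 2 > 0` and `c = √(Q(y)(n+1)/(nν))`, the
one-step predictive ratio `λ_{n+1,p}(y,x)/λ_{n,p}(y)` is the density at `x` of
`ȳ + c T`, where `T` is Student t on `ν` degrees of freedom. -/
theorem gosset_rule (n : ℕ) (hn : 2 ≤ n) (p : ℝ) (hν : 0 < (n : ℝ) + p - 2)
    (y : Fin n → ℝ) (hQ : 0 < Qstat n y) (x : ℝ)
    (ν : ℝ) (hνdef : ν = (n : ℝ) + p - 2)
    (c : ℝ) (hcdef : c = Real.sqrt (Qstat n y * ((n : ℝ) + 1) / ((n : ℝ) * ν))) :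
    lamClosed (n + 1) p (Fin.snoc y x) / lamClosed n p y =
      (1 / c) * studentDensity ν ((x - (∑ i, y i) / (n : ℝ)) / c) :=
  gosset_rule_general n p hν y hQ x ν hνdef c hcdef
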